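/- Let n ≥ 2 and λ = (n−1, 1), with row word w1 = 1 1 ⋯ 1 2 (letters 1 with one 2) and column word w2 = 1 2 3 ⋯ (n−1) 1, which are complementary. Identify R(w1) with {1, …, n} via the position of the letter 2, so that columns of the Specht matrix lie in ℝ^n with standard basis e_1, …, e_n. Then every column of the Specht matrix equals e_i − e_j for some i ≠ j; and if n ≥ 4, then for every pair i ≠ j both e_i − e_j and e_j − e_i occur among the columns. -/

import Mathlib

/-- The action of a permutation on a word: `σ · w = w ∘ σ⁻¹`. -/
def wact {n : ℕ} (σ : Equiv.Perm (Fin n)) (w : Fin n → ℕ) : Fin n → ℕ :=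
  w ∘ σ.symm

/-- `r` is a rearrangement of `w`. -/
def IsRearr {n : ℕ} (w r : Fin n → ℕ) : Prop :=
  ∃ σ : Equiv.Perm (Fin n), wact σ w = r

/-- The type of rearrangements of a word `w`. -/
abbrev Rearr {n : ℕ} (w : Fin n → ℕ) : Type :=
  {r : Fin n → ℕ // IsRearr w r}

theorem wact_wact {n : ℕ} (σ τ : Equiv.Perm (Fin n)) (w : Fin n → ℕ) :
    wact σ (wact τ w) = wact (σ * τ) w := rfl

/-- The action of a permutation on the type of rearrangements of `w`. -/
def ract {n : ℕ} {w : Fin n → ℕ} (σ : Equiv.Perm (Fin n)) (r : Rearr w) : Rearr w :=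
  ⟨wact σ r.1, by
    obtain ⟨τ, hτ⟩ := r.2
    exact ⟨σ * τ, by rw [← hτ, wact_wact]⟩⟩

instance {n : ℕ} (w : Fin n → ℕ) : Finite (Rearr w) :=
  Finite.of_surjective (fun σ : Equiv.Perm (Fin n) => (⟨wact σ w, σ, rfl⟩ : Rearr w))
    (fun r => by obtain ⟨r, σ, hσ⟩ := r; exact ⟨σ, Subtype.ext hσ⟩)

noncomputable instance {n : ℕ} (w : Fin n → ℕ) : Fintype (Rearr w) :=
  Fintype.ofFinite _

/-- Young's character `Y(r1, r2) = Σ sign σ` over all `σ` with `σ·w1 = r1` and `σ·w2 = r2`. -/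
def youngChar {n : ℕ} (w1 w2 : Fin n → ℕ) (r1 r2 : Fin n → ℕ) : ℤ :=
  ∑ σ : Equiv.Perm (Fin n),
    if wact σ w1 = r1 ∧ wact σ w2 = r2 then (Equiv.Perm.sign σ : ℤ) else 0

/-- A pair of words has trivial (diagonal) stabilizer. -/
def FreePair {n : ℕ} (p : (Fin n → ℕ) × (Fin n → ℕ)) : Prop :=
  ∀ σ : Equiv.Perm (Fin n), wact σ p.1 = p.1 → wact σ p.2 = p.2 → σ = 1

/-- The diagonal action on `R(w1) × R(w2)` has exactly one free orbit. -/
def HaveComplRearr {n : ℕ} (w1 w2 : Fin n → ℕ) : Prop :=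
  (∃ p : (Fin n → ℕ) × (Fin n → ℕ), IsRearr w1 p.1 ∧ IsRearr w2 p.2 ∧ FreePair p) ∧
  ∀ p q : (Fin n → ℕ) × (Fin n → ℕ),
    IsRearr w1 p.1 → IsRearr w2 p.2 → FreePair p →
    IsRearr w1 q.1 → IsRearr w2 q.2 → FreePair q →
    ∃ σ : Equiv.Perm (Fin n), wact σ p.1 = q.1 ∧ wact σ p.2 = q.2

/-- `w1, w2` are complementary: there is a unique free orbit and `(w1, w2)` lies in it. -/
def Complementary {n : ℕ} (w1 w2 : Fin n → ℕ) : Prop :=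
  HaveComplRearr w1 w2 ∧ FreePair (w1, w2)

/-- A column of the Specht matrix, as a complex vector indexed by `R(w1)`. -/
noncomputable def spechtCol {n : ℕ} (w1 w2 : Fin n → ℕ) (r2 : Rearr w2) : Rearr w1 → ℂ :=
  fun r1 => (youngChar w1 w2 r1.1 r2.1 : ℂ)

/-- The Specht module: the span of the columns of the Specht matrix. -/
noncomputable def SpechtModule {n : ℕ} (w1 w2 : Fin n → ℕ) : Submodule ℂ (Rearr w1 → ℂ) :=
  Submodule.span ℂ (Set.range (spechtCol w1 w2))

/-- A column of the real Specht matrix. -/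
noncomputable def spechtColR {n : ℕ} (w1 w2 : Fin n → ℕ) (r2 : Rearr w2) : Rearr w1 → ℝ :=
  fun r1 => (youngChar w1 w2 r1.1 r2.1 : ℝ)

/-- The Specht polytope: the convex hull of the columns of the real Specht matrix. -/
noncomputable def SpechtPolytope {n : ℕ} (w1 w2 : Fin n → ℕ) : Set (Rearr w1 → ℝ) :=
  convexHull ℝ (Set.range (spechtColR w1 w2))

/-- The `S_n`-action on complex-valued functions on `R(w)`: `(σ·f)(r) = f(σ⁻¹·r)`. -/
def factC {n : ℕ} {w : Fin n → ℕ} (σ : Equiv.Perm (Fin n)) (f : Rearr w → ℂ) :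
    Rearr w → ℂ :=
  fun r => f (ract σ⁻¹ r)

/-- A weakly decreasing list of positive integers (a partition shape). -/
def SortedPartList (l : List ℕ) : Prop :=
  l.Pairwise (· ≥ ·) ∧ ∀ x ∈ l, 0 < x

/-- The multiset of letter multiplicities of a word. -/
def multMultiset {n : ℕ} (w : Fin n → ℕ) : Multiset ℕ :=
  (Finset.image w Finset.univ).val.map
    (fun v => (Finset.univ.filter (fun i => w i = v)).card)

/-- The decreasingly sorted letter multiplicities of `w` are given by the list `l`. -/
def HasMultiplicities {n : ℕ} (w : Fin n → ℕ) (l : List ℕ) : Prop :=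
  SortedPartList l ∧ (l : Multiset ℕ) = multMultiset w

/-- The conjugate partition, as a list: `λ*_i = #{k : λ_k ≥ i}`. -/
def conjList (l : List ℕ) : List ℕ :=
  (List.range (l.getD 0 0)).map (fun j => (l.filter (fun x => j + 1 ≤ x)).length)

/-- The complementary pair `(w1, w2)` corresponds to the partition `l`. -/
def CorrespondsTo {n : ℕ} (w1 w2 : Fin n → ℕ) (l : List ℕ) : Prop :=
  HasMultiplicities w1 l ∧ HasMultiplicities w2 (conjList l)

/-- The row word `w1 = 1 1 ⋯ 1 2` for the partition `(n-1, 1)`. -/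
def rowWord (n : ℕ) : Fin n → ℕ := fun i => if (i : ℕ) = n - 1 then 2 else 1

/-- The column word `w2 = 1 2 3 ⋯ (n-1) 1` for the partition `(n-1, 1)`. -/
def colWord (n : ℕ) : Fin n → ℕ := fun i => if (i : ℕ) = n - 1 then 1 else (i : ℕ) + 1

/-- The rearrangement of the row word with the letter `2` in position `k`. -/
def rowWordAt {n : ℕ} (k : Fin n) : Fin n → ℕ := fun i => if i = k then 2 else 1

/-!
The stabilizer of the column word `w₂ = 1 2 ⋯ (n-1) 1` is `{1, s}` with `s` the transposition of
its first and last positions, so the `σ` with `σ·w₂ = ρ·w₂` are exactly `ρ` and `ρ s`. As `σ` acts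
on rearrangements of the row word by moving the letter `2` from the last position to `σ (n-1)`,
Young's character contributes `sign ρ` at `ρ (n-1)` and `sign (ρ s) = -sign ρ` at `ρ 0`: the
column of `ρ·w₂` is `± (e_{ρ (n-1)} - e_{ρ 0})`. The same stabilizer computation shows that a pair
`(e_k, ρ·w₂)` is free only when `k ∈ {ρ 0, ρ (n-1)}`, which gives complementarity. For `n ≥ 4`
the alternating group is `2`-transitive, so both signs of every difference are realized.
-/

section Words

variable {n : ℕ}

theorem wact_one (w : Fin n → ℕ) : wact 1 w = w := rfl

theorem wact_injective (σ : Equiv.Perm (Fin n)) : Function.Injective (wact σ) :=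
  σ.symm.surjective.injective_comp_right

theorem wact_mul_eq_wact_iff (ρ τ : Equiv.Perm (Fin n)) (w : Fin n → ℕ) :
    wact (ρ * τ) w = wact ρ w ↔ wact τ w = w := by
  rw [← wact_wact]
  exact (wact_injective ρ).eq_iff

theorem wact_swap_of_eq {w : Fin n → ℕ} {a b : Fin n} (h : w a = w b) :
    wact (Equiv.swap a b) w = w := by
  funext i
  simp only [wact, Function.comp_apply, Equiv.symm_swap, Equiv.swap_apply_def]
  split_ifs <;> simp_all

theorem wact_rowWordAt (σ : Equiv.Perm (Fin n)) (k : Fin n) :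
    wact σ (rowWordAt k) = rowWordAt (σ k) := by
  funext i
  simp only [wact, Function.comp_apply, rowWordAt, Equiv.symm_apply_eq]

theorem rowWordAt_injective : Function.Injective (rowWordAt (n := n)) := by
  intro k k' h
  by_contra hne
  simpa [rowWordAt, hne] using congrFun h k

theorem youngChar_wact_right (w₁ w₂ r₁ : Fin n → ℕ) (ρ : Equiv.Perm (Fin n)) :
    youngChar w₁ w₂ r₁ (wact ρ w₂) = ∑ τ : Equiv.Perm (Fin n),
      if wact τ w₂ = w₂ ∧ wact (ρ * τ) w₁ = r₁ then (Equiv.Perm.sign (ρ * τ) : ℤ) else 0 := by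
  rw [youngChar, ← Equiv.sum_comp (Equiv.mulLeft ρ)]
  simp only [Equiv.coe_mulLeft, wact_mul_eq_wact_iff, and_comm]

theorem youngChar_wact_right_of_stabilizer_eq_pair {w₂ : Fin n → ℕ} {t : Equiv.Perm (Fin n)}
    (ht : t ≠ 1) (hstab : ∀ τ, wact τ w₂ = w₂ ↔ τ = 1 ∨ τ = t)
    (w₁ r₁ : Fin n → ℕ) (ρ : Equiv.Perm (Fin n)) :
    youngChar w₁ w₂ r₁ (wact ρ w₂) =
      (if wact ρ w₁ = r₁ then (Equiv.Perm.sign ρ : ℤ) else 0) +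
      (if wact (ρ * t) w₁ = r₁ then (Equiv.Perm.sign (ρ * t) : ℤ) else 0) := by
  have hfilter : Finset.univ.filter (fun τ => wact τ w₂ = w₂) = {1, t} := by
    ext τ
    simp [hstab]
  rw [youngChar_wact_right]
  simp only [ite_and]
  rw [← Finset.sum_filter, hfilter, Finset.sum_pair (Ne.symm ht), mul_one]

theorem complementary_of_forall_freePair {w₁ w₂ : Fin n → ℕ} (hfree : FreePair (w₁, w₂))
    (horbit : ∀ p : (Fin n → ℕ) × (Fin n → ℕ), IsRearr w₁ p.1 → IsRearr w₂ p.2 → FreePair p →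
      ∃ σ : Equiv.Perm (Fin n), wact σ w₁ = p.1 ∧ wact σ w₂ = p.2) :
    Complementary w₁ w₂ := by
  refine ⟨⟨⟨(w₁, w₂), ⟨1, wact_one w₁⟩, ⟨1, wact_one w₂⟩, hfree⟩, ?_⟩, hfree⟩
  intro p q hp₁ hp₂ hp hq₁ hq₂ hq
  obtain ⟨σ, hσ₁, hσ₂⟩ := horbit p hp₁ hp₂ hp
  obtain ⟨τ, hτ₁, hτ₂⟩ := horbit q hq₁ hq₂ hq
  refine ⟨τ * σ⁻¹, ?_, ?_⟩
  · rw [← hσ₁, wact_wact, inv_mul_cancel_right, hτ₁]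
  · rw [← hσ₂, wact_wact, inv_mul_cancel_right, hτ₂]

end Words

theorem Equiv.Perm.eq_one_or_eq_swap_of_forall_apply_eq {α : Type*} [DecidableEq α] {a b : α}
    (hab : a ≠ b) (τ : Equiv.Perm α) (hτ : ∀ i, i ≠ a → i ≠ b → τ i = i) :
    τ = 1 ∨ τ = Equiv.swap a b := by
  have hmem : ∀ x, x = a ∨ x = b → τ x = a ∨ τ x = b := by
    intro x hx
    by_contra! h
    have hx' : τ x = x := τ.injective (hτ (τ x) h.1 h.2)
    rcases hx with rfl | rfl
    · exact h.1 hx'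
    · exact h.2 hx'
  have hτb : τ b ≠ τ a := τ.injective.ne hab.symm
  rcases hmem a (Or.inl rfl) with ha | ha
  · have hb : τ b = b := (hmem b (Or.inr rfl)).resolve_left (ha ▸ hτb)
    left
    ext i
    by_cases hia : i = a
    · simp [hia, ha]
    by_cases hib : i = b
    · simp [hib, hb]
    simp [hτ i hia hib]
  · have hb : τ b = a := (hmem b (Or.inr rfl)).resolve_right (ha ▸ hτb)
    right
    ext i
    by_cases hia : i = a
    · simp [hia, ha]
    by_cases hib : i = b
    · simp [hib, hb]
    simp [hτ i hia hib, Equiv.swap_apply_of_ne_of_ne hia hib]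

theorem exists_sign_eq_one_apply_eq_apply_eq {α : Type*} [Fintype α] [DecidableEq α]
    (hα : 4 ≤ Nat.card α) {a b c d : α} (hab : a ≠ b) (hcd : c ≠ d) :
    ∃ ρ : Equiv.Perm α, Equiv.Perm.sign ρ = 1 ∧ ρ a = c ∧ ρ b = d := by
  have := alternatingGroup.isMultiplyPretransitive α
  have : MulAction.IsMultiplyPretransitive (alternatingGroup α) α 2 :=
    MulAction.isMultiplyPretransitive_of_le (n := Nat.card α - 2) (by omega) (by omega)
  obtain ⟨ρ, hρa, hρb⟩ := MulAction.is_two_pretransitive_iff.mp this hab hcd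
  exact ⟨ρ, ρ.2, hρa, hρb⟩

section Hook

variable {m : ℕ}

local notation "s₀" => Equiv.swap (0 : Fin (m + 2)) (Fin.last (m + 1))

theorem rowWord_eq_rowWordAt_last : rowWord (m + 2) = rowWordAt (Fin.last (m + 1)) := by
  funext i
  simp [rowWord, rowWordAt, Fin.ext_iff]

theorem colWord_zero_eq_colWord_last : colWord (m + 2) 0 = colWord (m + 2) (Fin.last (m + 1)) := by
  simp [colWord]

theorem eq_of_colWord_eq {i x : Fin (m + 2)} (hi₀ : i ≠ 0) (hiₗ : i ≠ Fin.last (m + 1))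
    (h : colWord (m + 2) x = colWord (m + 2) i) : x = i := by
  simp only [ne_eq, Fin.ext_iff, Fin.val_zero, Fin.val_last] at hi₀ hiₗ
  simp only [colWord] at h
  ext
  split_ifs at h <;> omega

theorem wact_colWord_eq_self_iff (τ : Equiv.Perm (Fin (m + 2))) :
    wact τ (colWord (m + 2)) = colWord (m + 2) ↔ τ = 1 ∨ τ = s₀ := by
  constructor
  · intro h
    refine τ.eq_one_or_eq_swap_of_forall_apply_eq Fin.last_pos.ne fun i hi₀ hiₗ => ?_
    apply eq_of_colWord_eq hi₀ hiₗ
    simpa [wact] using (congrFun h (τ i)).symm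
  · rintro (rfl | rfl)
    · exact wact_one _
    · exact wact_swap_of_eq colWord_zero_eq_colWord_last

theorem youngChar_rowWordAt (k : Fin (m + 2)) (ρ : Equiv.Perm (Fin (m + 2))) :
    youngChar (rowWord (m + 2)) (colWord (m + 2)) (rowWordAt k) (wact ρ (colWord (m + 2))) =
      (if ρ (Fin.last (m + 1)) = k then (Equiv.Perm.sign ρ : ℤ) else 0) +
      (if ρ 0 = k then -(Equiv.Perm.sign ρ : ℤ) else 0) := by
  rw [youngChar_wact_right_of_stabilizer_eq_pair (Equiv.swap_eq_one_iff.not.mpr Fin.last_pos.ne)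
    wact_colWord_eq_self_iff, rowWord_eq_rowWordAt_last]
  simp only [wact_rowWordAt, rowWordAt_injective.eq_iff, Equiv.Perm.mul_apply,
    Equiv.swap_apply_right, Equiv.Perm.sign_mul, Equiv.Perm.sign_swap Fin.last_pos.ne, mul_neg,
    mul_one, Units.val_neg]

theorem spechtColumn_wact_colWord (ρ : Equiv.Perm (Fin (m + 2))) :
    (fun k => (youngChar (rowWord (m + 2)) (colWord (m + 2)) (rowWordAt k)
      (wact ρ (colWord (m + 2))) : ℝ)) =
      (Equiv.Perm.sign ρ : ℤ) • (Pi.single (ρ (Fin.last (m + 1))) 1 - Pi.single (ρ 0) 1) := by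
  have hρ : ρ (Fin.last (m + 1)) ≠ ρ 0 := ρ.injective.ne Fin.last_pos.ne'
  funext k
  simp only [youngChar_rowWordAt, Pi.smul_apply, Pi.sub_apply, Pi.single_apply, eq_comm (a := k),
    zsmul_eq_mul]
  split_ifs with hₗ h₀ h₀
  · exact absurd (hₗ.trans h₀.symm) hρ
  all_goals push_cast; ring

theorem freePair_rowWord_colWord : FreePair (rowWord (m + 2), colWord (m + 2)) := by
  intro σ h₁ h₂
  rcases (wact_colWord_eq_self_iff σ).mp h₂ with rfl | rfl
  · rfl
  · rw [rowWord_eq_rowWordAt_last, wact_rowWordAt, rowWordAt_injective.eq_iff,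
      Equiv.swap_apply_right] at h₁
    exact absurd h₁ Fin.last_pos.ne

theorem exists_wact_eq_of_freePair (p : (Fin (m + 2) → ℕ) × (Fin (m + 2) → ℕ))
    (h₁ : IsRearr (rowWord (m + 2)) p.1) (h₂ : IsRearr (colWord (m + 2)) p.2) (hp : FreePair p) :
    ∃ σ : Equiv.Perm (Fin (m + 2)), wact σ (rowWord (m + 2)) = p.1 ∧
      wact σ (colWord (m + 2)) = p.2 := by
  obtain ⟨r₁, r₂⟩ := p
  obtain ⟨τ, rfl⟩ := h₁
  obtain ⟨ρ, rfl⟩ := h₂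
  simp only [rowWord_eq_rowWordAt_last, wact_rowWordAt] at hp ⊢
  have hk : τ (Fin.last (m + 1)) = ρ (Fin.last (m + 1)) ∨ τ (Fin.last (m + 1)) = ρ 0 := by
    by_contra! hk
    have hswap := hp (Equiv.swap (ρ 0) (ρ (Fin.last (m + 1))))
      (by rw [wact_rowWordAt, Equiv.swap_apply_of_ne_of_ne hk.2 hk.1])
      (by rw [Equiv.swap_apply_apply, wact_wact, inv_mul_cancel_right, wact_mul_eq_wact_iff,
        wact_colWord_eq_self_iff]; exact Or.inr rfl)
    exact Fin.last_pos.ne (ρ.injective (Equiv.swap_eq_one_iff.mp hswap))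
  rcases hk with h | h
  · exact ⟨ρ, by rw [h], rfl⟩
  · refine ⟨ρ * s₀, by rw [h, Equiv.Perm.mul_apply, Equiv.swap_apply_right], ?_⟩
    rw [wact_mul_eq_wact_iff, wact_colWord_eq_self_iff]
    exact Or.inr rfl

theorem complementary_rowWord_colWord : Complementary (rowWord (m + 2)) (colWord (m + 2)) :=
  complementary_of_forall_freePair freePair_rowWord_colWord exists_wact_eq_of_freePair

end Hook

/-- For `λ = (n-1, 1)` with the indicated row and column words (which
are complementary), identifying `R(w1)` with `{1, …, n}` via the position of the
letter `2`, every column of the Specht matrix is of the form `e_i − e_j` with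
`i ≠ j`; and for `n ≥ 4`, every difference `e_i − e_j` (`i ≠ j`) occurs as a column. -/
theorem specht_stmt_13 {n : ℕ} (hn : 2 ≤ n) :
    Complementary (rowWord n) (colWord n) ∧
    (∀ r2 : Fin n → ℕ, IsRearr (colWord n) r2 →
      ∃ i j : Fin n, i ≠ j ∧
        (fun k : Fin n => (youngChar (rowWord n) (colWord n) (rowWordAt k) r2 : ℝ))
          = Pi.single i 1 - Pi.single j 1) ∧
    (4 ≤ n → ∀ i j : Fin n, i ≠ j →
      ∃ r2 : Fin n → ℕ, IsRearr (colWord n) r2 ∧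
        (fun k : Fin n => (youngChar (rowWord n) (colWord n) (rowWordAt k) r2 : ℝ))
          = Pi.single i 1 - Pi.single j 1) := by
  obtain ⟨m, rfl⟩ := Nat.exists_eq_add_of_le' hn
  refine ⟨complementary_rowWord_colWord, ?_, ?_⟩
  · rintro _ ⟨ρ, rfl⟩
    have hρ : ρ (Fin.last (m + 1)) ≠ ρ 0 := ρ.injective.ne Fin.last_pos.ne'
    rw [spechtColumn_wact_colWord]
    rcases Int.units_eq_one_or (Equiv.Perm.sign ρ) with h | h
    · exact ⟨_, _, hρ, by rw [h, Units.val_one, one_smul]⟩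
    · exact ⟨_, _, hρ.symm, by rw [h, Units.val_neg, Units.val_one, neg_one_smul, neg_sub]⟩
  · intro h4 i j hij
    obtain ⟨ρ, hsign, hi, hj⟩ := exists_sign_eq_one_apply_eq_apply_eq (by simpa using h4)
      Fin.last_pos.ne' hij
    exact ⟨_, ⟨ρ, rfl⟩, by rw [spechtColumn_wact_colWord, hsign, hi, hj, Units.val_one, one_smul]⟩
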